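/- For all density matrices ρ and σ of the same dimension, (1/2)‖ρ − σ‖₁ ≤ √(1 − tr(ρσ)). -/

import Mathlib

open Matrix Kronecker BigOperators
open scoped ComplexOrder

noncomputable section

/-- The positive semidefinite square root (as defined in the older Mathlib). -/
def Matrix.PosSemidef.sqrt {n : Type*} [Fintype n] [DecidableEq n] {𝕜 : Type*} [RCLike 𝕜]
    {A : Matrix n n 𝕜} (hA : A.PosSemidef) : Matrix n n 𝕜 :=
  hA.1.eigenvectorUnitary.1 * diagonal ((↑) ∘ (fun x => Real.sqrt x) ∘ hA.1.eigenvalues) *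
    (star hA.1.eigenvectorUnitary : Matrix n n 𝕜)

/-- The trace norm (sum of singular values) of a complex matrix: `tr √(AᴴA)`. -/
def traceNorm {m n : Type*} [Fintype m] [Fintype n] [DecidableEq n] (A : Matrix m n ℂ) : ℝ :=
  ((Matrix.posSemidef_conjTranspose_mul_self A).sqrt).trace.re

/-- A density matrix: positive semidefinite with trace one. -/
def IsDensity {n : Type*} [Fintype n] [DecidableEq n] (ρ : Matrix n n ℂ) : Prop :=
  ρ.PosSemidef ∧ ρ.trace = 1

/-- Trace norm contraction coefficient of a map on matrices. -/
def etaTr {dA dB : ℕ} (Φ : Matrix (Fin dA) (Fin dA) ℂ → Matrix (Fin dB) (Fin dB) ℂ) : ℝ :=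
  sSup {r : ℝ | ∃ ρ σ : Matrix (Fin dA) (Fin dA) ℂ, IsDensity ρ ∧ IsDensity σ ∧ ρ ≠ σ ∧
    r = traceNorm (Φ ρ - Φ σ) / traceNorm (ρ - σ)}

/-- Optimal success probability for transmitting one of `k` messages through `Φ`. -/
def Psucc {dA dB : ℕ} (Φ : Matrix (Fin dA) (Fin dA) ℂ → Matrix (Fin dB) (Fin dB) ℂ)
    (k : ℕ) : ℝ :=
  sSup {r : ℝ | ∃ (M : Fin k → Matrix (Fin dB) (Fin dB) ℂ)
      (ρ : Fin k → Matrix (Fin dA) (Fin dA) ℂ),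
    (∀ i, (M i).PosSemidef) ∧ (∑ i, M i = 1) ∧ (∀ i, IsDensity (ρ i)) ∧
    r = (1 / (k : ℝ)) * ∑ i, ((M i * Φ (ρ i)).trace).re}

/-- The Euclidean (ℓ₂) norm of a complex vector. -/
def l2norm {n : Type*} [Fintype n] (v : n → ℂ) : ℝ :=
  Real.sqrt (∑ i, ‖v i‖ ^ 2)

/-- Choi state of a map on matrices: `(1/dA) ∑ᵢⱼ Eᵢⱼ ⊗ Φ(Eᵢⱼ)`. -/
def choi {dA dB : ℕ} (Φ : Matrix (Fin dA) (Fin dA) ℂ → Matrix (Fin dB) (Fin dB) ℂ) :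
    Matrix (Fin dA × Fin dB) (Fin dA × Fin dB) ℂ :=
  (dA : ℂ)⁻¹ • ∑ i : Fin dA, ∑ j : Fin dA,
    (Matrix.single i j (1 : ℂ)) ⊗ₖ (Φ (Matrix.single i j (1 : ℂ)))


/-! Let `P` be the spectral projection onto the nonnegative part of `ρ - σ`, so that
`‖ρ - σ‖₁ / 2 = tr (P (ρ - σ)) = x² - y²` for the Frobenius norms `x = ‖√ρ P‖₂`, `y = ‖√σ P‖₂`;
with `x' = ‖√ρ (1 - P)‖₂` and `y' = ‖√σ (1 - P)‖₂` we have `x² + x'² = y² + y'² = 1`.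
Writing `√ρ √σ = (√ρ P)(P √σ) + (√ρ (1 - P))((1 - P) √σ)`, submultiplicativity of the Frobenius
norm gives `√(tr ρσ) = ‖√ρ √σ‖₂ ≤ x y + x' y'`, and for unit vectors `(x, x')`, `(y, y')` one has
`(x² - y²)² ≤ 1 - (x y + x' y')²`. -/

open scoped MatrixOrder
attribute [local instance] Matrix.frobeniusNormedAddCommGroup

theorem Matrix.frobenius_norm_sq_eq_re_trace {m n : Type*} [Fintype m] [Fintype n]
    (A : Matrix m n ℂ) : ‖A‖ ^ 2 = (Aᴴ * A).trace.re := by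
  rw [frobenius_norm_def, ← Real.rpow_natCast, ← Real.rpow_mul (by positivity), one_div,
    Nat.cast_ofNat, inv_mul_cancel₀ two_ne_zero, Real.rpow_one]
  simp only [trace, diag, mul_apply, conjTranspose_apply, Complex.re_sum, Finset.sum_comm (γ := m)]
  congr! with i - j
  rw [Complex.star_def, Complex.conj_mul']
  norm_cast

theorem sq_sub_sq_sq_le_one_sub_sq {x x' y y' : ℝ} (hx : x ^ 2 + x' ^ 2 = 1)
    (hy : y ^ 2 + y' ^ 2 = 1) : (x ^ 2 - y ^ 2) ^ 2 ≤ 1 - (x * y + x' * y') ^ 2 := by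
  have lagrange : 1 - (x * y + x' * y') ^ 2 = (x * y' - x' * y) ^ 2 := by
    linear_combination (-(x ^ 2 + x' ^ 2)) * hy - hx
  have factor : x ^ 2 - y ^ 2 = (x * y' - x' * y) * (x * y' + x' * y) := by
    linear_combination y ^ 2 * hx - x ^ 2 * hy
  have cauchy_schwarz : (x * y' + x' * y) ^ 2 ≤ 1 := by
    nlinarith [sq_nonneg (x * y - x' * y')]
  rw [lagrange, factor, mul_pow]
  exact mul_le_of_le_one_right (sq_nonneg _) cauchy_schwarz

variable {n : Type*} [Fintype n]

theorem IsStarProjection.trace_conjTranspose_mul_mul_self {P : Matrix n n ℂ}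
    (hP : IsStarProjection P) (A : Matrix n n ℂ) : (Pᴴ * A * P).trace = (P * A).trace := by
  rw [trace_mul_cycle, ← star_eq_conjTranspose, hP.isSelfAdjoint.star_eq, hP.isIdempotentElem.eq]

variable [DecidableEq n]

theorem IsStarProjection.norm_mul_conjTranspose_le {m : Type*} [Fintype m] {P : Matrix n n ℂ}
    (hP : IsStarProjection P) (A B : Matrix m n ℂ) :
    ‖A * Bᴴ‖ ≤ ‖A * P‖ * ‖B * P‖ + ‖A * (1 - P)‖ * ‖B * (1 - P)‖ := by
  have hsplit : A * Bᴴ = A * P * (B * P)ᴴ + A * (1 - P) * (B * (1 - P))ᴴ := by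
    rw [conjTranspose_mul, conjTranspose_mul, ← star_eq_conjTranspose, ← star_eq_conjTranspose,
      hP.isSelfAdjoint.star_eq, hP.one_sub.isSelfAdjoint.star_eq, Matrix.mul_assoc,
      ← Matrix.mul_assoc P, hP.isIdempotentElem.eq, Matrix.mul_assoc A (1 - P),
      ← Matrix.mul_assoc (1 - P), hP.one_sub.isIdempotentElem.eq, ← Matrix.mul_assoc,
      ← Matrix.mul_assoc, ← Matrix.add_mul, ← Matrix.mul_add, add_sub_cancel, Matrix.mul_one]
  rw [hsplit, ← frobenius_norm_conjTranspose (B * P), ← frobenius_norm_conjTranspose (B * (1 - P))]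
  exact (norm_add_le _ _).trans (add_le_add (frobenius_norm_mul _ _) (frobenius_norm_mul _ _))

theorem Matrix.PosSemidef.sqrt_eq_cfcSqrt {𝕜 : Type*} [RCLike 𝕜] {A : Matrix n n 𝕜}
    (hA : A.PosSemidef) : hA.sqrt = CFC.sqrt A := by
  rw [CFC.sqrt_eq_cfc, cfc_nnreal_eq_real _ A hA.nonneg, hA.1.cfc_eq]
  simp only [IsHermitian.cfc, Matrix.PosSemidef.sqrt, Unitary.conjStarAlgAut_apply]
  congr 3
  funext i
  simp [max_eq_left (hA.eigenvalues_nonneg i)]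

theorem traceNorm_eq_re_trace_cfcAbs (A : Matrix n n ℂ) :
    traceNorm A = (CFC.abs A).trace.re := by
  rw [traceNorm, PosSemidef.sqrt_eq_cfcSqrt]
  rfl

theorem Matrix.IsHermitian.exists_isStarProjection_traceNorm_div_two_eq {H : Matrix n n ℂ}
    (hH : H.IsHermitian) (h0 : H.trace = 0) :
    ∃ P : Matrix n n ℂ, IsStarProjection P ∧ traceNorm H / 2 = (P * H).trace.re := by
  have hcont (f : ℝ → ℝ) : ContinuousOn f (spectrum ℝ H) :=
    Matrix.finite_real_spectrum.continuousOn f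
  set P := cfc (fun x : ℝ => if 0 ≤ x then (1 : ℝ) else 0) H
  refine ⟨P, ⟨?_, cfc_predicate _ _⟩, ?_⟩
  · rw [IsIdempotentElem, ← cfc_mul _ _ H (hcont _) (hcont _)]
    exact cfc_congr fun x _ => by split_ifs <;> simp
  · have hPH : P * H = H⁺ := by
      conv_lhs => enter [2]; rw [← cfc_id' ℝ H]
      rw [← cfc_mul _ _ H (hcont _) (hcont _), CFC.posPart_def, cfcₙ_eq_cfc]
      exact cfc_congr fun x _ => by split_ifs with h <;> simp [posPart, h, le_of_not_ge]
    rw [traceNorm_eq_re_trace_cfcAbs, eq_sub_of_add_eq (CFC.abs_add_self H hH.isSelfAdjoint),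
      hPH, trace_sub, h0, trace_smul]
    simp

theorem Matrix.PosSemidef.norm_cfcSqrt_mul_sq {ρ : Matrix n n ℂ} (hρ : ρ.PosSemidef)
    (M : Matrix n n ℂ) : ‖CFC.sqrt ρ * M‖ ^ 2 = (Mᴴ * ρ * M).trace.re := by
  have hs : (CFC.sqrt ρ)ᴴ = CFC.sqrt ρ := (CFC.sqrt_nonneg ρ).isSelfAdjoint
  rw [frobenius_norm_sq_eq_re_trace, conjTranspose_mul, hs, mul_assoc, ← mul_assoc (CFC.sqrt ρ),
    CFC.sqrt_mul_sqrt_self ρ hρ.nonneg, ← mul_assoc]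

theorem IsDensity.norm_cfcSqrt_mul_sq_add_norm_cfcSqrt_mul_one_sub_sq {ρ P : Matrix n n ℂ}
    (hρ : IsDensity ρ) (hP : IsStarProjection P) :
    ‖CFC.sqrt ρ * P‖ ^ 2 + ‖CFC.sqrt ρ * (1 - P)‖ ^ 2 = 1 := by
  rw [hρ.1.norm_cfcSqrt_mul_sq, hρ.1.norm_cfcSqrt_mul_sq, hP.trace_conjTranspose_mul_mul_self,
    hP.one_sub.trace_conjTranspose_mul_mul_self, ← Complex.add_re, ← trace_add, ← add_mul,
    add_sub_cancel, one_mul, hρ.2, Complex.one_re]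

/-- for density matrices `ρ, σ`, `(1/2)‖ρ − σ‖₁ ≤ √(1 − tr(ρσ))`. -/
theorem half_traceNorm_le_sqrt_one_sub_trace_mul {n : ℕ}
    (ρ σ : Matrix (Fin n) (Fin n) ℂ) (hρ : IsDensity ρ) (hσ : IsDensity σ) :
    (1 / 2) * traceNorm (ρ - σ) ≤ Real.sqrt (1 - ((ρ * σ).trace).re) := by
  obtain ⟨P, hP, hPtr⟩ := (hρ.1.1.sub hσ.1.1).exists_isStarProjection_traceNorm_div_two_eq
    (by rw [trace_sub, hρ.2, hσ.2, sub_self])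
  set s := CFC.sqrt ρ
  set t := CFC.sqrt σ
  have ht : tᴴ = t := (CFC.sqrt_nonneg σ).isSelfAdjoint
  have hnorm : ‖s * t‖ ≤ ‖s * P‖ * ‖t * P‖ + ‖s * (1 - P)‖ * ‖t * (1 - P)‖ := by
    simpa only [ht] using hP.norm_mul_conjTranspose_le s t
  have hoverlap : ‖s * t‖ ^ 2 = (ρ * σ).trace.re := by
    rw [hρ.1.norm_cfcSqrt_mul_sq, ht, trace_mul_cycle, CFC.sqrt_mul_sqrt_self σ hσ.1.nonneg,
      trace_mul_comm]
  have hdist : (1 / 2) * traceNorm (ρ - σ) = ‖s * P‖ ^ 2 - ‖t * P‖ ^ 2 := by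
    rw [hρ.1.norm_cfcSqrt_mul_sq, hσ.1.norm_cfcSqrt_mul_sq, hP.trace_conjTranspose_mul_mul_self,
      hP.trace_conjTranspose_mul_mul_self, ← Complex.sub_re, ← trace_sub, ← mul_sub, ← hPtr]
    ring
  have hsq : (‖s * P‖ ^ 2 - ‖t * P‖ ^ 2) ^ 2 ≤ 1 - (ρ * σ).trace.re :=
    (sq_sub_sq_sq_le_one_sub_sq (hρ.norm_cfcSqrt_mul_sq_add_norm_cfcSqrt_mul_one_sub_sq hP)
      (hσ.norm_cfcSqrt_mul_sq_add_norm_cfcSqrt_mul_one_sub_sq hP)).trans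
      (by rw [← hoverlap]; gcongr)
  calc (1 / 2) * traceNorm (ρ - σ) ≤ |‖s * P‖ ^ 2 - ‖t * P‖ ^ 2| := hdist ▸ le_abs_self _
    _ = Real.sqrt ((‖s * P‖ ^ 2 - ‖t * P‖ ^ 2) ^ 2) := (Real.sqrt_sq_eq_abs _).symm
    _ ≤ Real.sqrt (1 - (ρ * σ).trace.re) := Real.sqrt_le_sqrt hsq
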